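/- arXiv:2103.05819 — 5 statements merged into one kernel-verified Lean document; each statement's English description precedes it below -/
import Mathlib

section
/- Derivative of the matrix exponential (integral form): for n×n real matrices A and B, the function t ↦ exp(A + t·B) is differentiable at t = 0, and its derivative equals ∫₀¹ exp(s·A) · B · exp((1−s)·A) ds. -/
/-!
Duhamel's formula: `u ↦ exp (u • X) * exp ((1 - u) • Y)` has derivative
`exp (u • X) * (X - Y) * exp ((1 - u) • Y)`, so integrating over `[0, 1]` gives
`exp X - exp Y = ∫₀¹ exp (s • X) * (X - Y) * exp ((1 - s) • Y) ds`. With `X = A + t • B` and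
`Y = A` this writes `exp (A + t • B) - exp A` as `t` times an integral depending continuously
on `t`, whose value at `t = 0` is therefore the derivative. Matrices form a real Banach algebra
under the `L∞` operator norm, which is equivalent to the entrywise sup norm and so gives the same
integrals.
-/

attribute [local instance] Matrix.normedAddCommGroup Matrix.normedSpace

open NormedSpace intervalIntegral

theorem hasDerivAt_of_sub_eq_smul {𝕜 E : Type*} [NontriviallyNormedField 𝕜] [NormedAddCommGroup E]
    [NormedSpace 𝕜 E] {f φ : 𝕜 → E} {x : 𝕜} (hf : ∀ t, f t - f x = (t - x) • φ t)
    (hφ : ContinuousAt φ x) : HasDerivAt f (φ x) x := by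
  refine hasDerivAt_iff_tendsto_slope.mpr (hφ.tendsto.mono_left nhdsWithin_le_nhds |>.congr' ?_)
  filter_upwards [self_mem_nhdsWithin] with t ht
  rw [slope_def_module, hf, smul_smul, inv_mul_cancel₀ (sub_ne_zero.mpr ht), one_smul]

section BanachAlgebra

variable {𝔸 : Type*} [NormedRing 𝔸] [NormedAlgebra ℝ 𝔸] [CompleteSpace 𝔸]

theorem continuous_exp_of_real_algebra : Continuous (exp : 𝔸 → 𝔸) :=
  continuous_iff_continuousAt.2 fun x => (exp_analytic (𝕂 := ℝ) x).continuousAt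

theorem hasDerivAt_exp_smul_mul_exp_one_sub_smul (X Y : 𝔸) (s : ℝ) :
    HasDerivAt (fun u : ℝ => exp (u • X) * exp ((1 - u) • Y))
      (exp (s • X) * (X - Y) * exp ((1 - s) • Y)) s := by
  have hY : HasDerivAt (fun u : ℝ => exp ((1 - u) • Y)) (-(Y * exp ((1 - s) • Y))) s := by
    simpa [Function.comp_def] using
      (hasDerivAt_exp_smul_const' Y (1 - s)).scomp s ((hasDerivAt_id s).const_sub 1)
  refine ((hasDerivAt_exp_smul_const X s).mul hY).congr_deriv ?_
  rw [mul_neg, ← mul_assoc, ← sub_eq_add_neg, ← sub_mul, ← mul_sub]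

theorem exp_sub_exp_eq_integral (X Y : 𝔸) :
    exp X - exp Y = ∫ s in (0 : ℝ)..1, exp (s • X) * (X - Y) * exp ((1 - s) • Y) := by
  have := continuous_exp_of_real_algebra (𝔸 := 𝔸)
  rw [integral_eq_sub_of_hasDerivAt (fun s _ => hasDerivAt_exp_smul_mul_exp_one_sub_smul X Y s)
    (Continuous.intervalIntegrable (by fun_prop) 0 1)]
  simp

theorem hasDerivAt_exp_add_smul (A B : 𝔸) :
    HasDerivAt (fun t : ℝ => exp (A + t • B))
      (∫ s in (0 : ℝ)..1, exp (s • A) * B * exp ((1 - s) • A)) 0 := by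
  set φ : ℝ → 𝔸 := fun t => ∫ s in (0 : ℝ)..1, exp (s • (A + t • B)) * B * exp ((1 - s) • A)
  have hφ : Continuous φ := by
    have := continuous_exp_of_real_algebra (𝔸 := 𝔸)
    exact continuous_parametric_intervalIntegral_of_continuous' (by fun_prop) 0 1
  have hsub : ∀ t : ℝ, exp (A + t • B) - exp (A + (0 : ℝ) • B) = (t - 0) • φ t := by
    intro t
    simp [φ, exp_sub_exp_eq_integral, ← integral_smul]
  simpa [φ] using hasDerivAt_of_sub_eq_smul hsub hφ.continuousAt

end BanachAlgebra

section Matrix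

open MeasureTheory

variable {m n : Type*} [Fintype m] [Fintype n]

theorem Matrix.linftyOp_integral {X : Type*} [MeasurableSpace X] (μ : Measure X)
    (f : X → Matrix m n ℝ) :
    @integral X (Matrix m n ℝ) Matrix.linftyOpNormedAddCommGroup Matrix.linftyOpNormedSpace _ μ f =
      ∫ x, f x ∂μ :=
  (@ContinuousLinearEquiv.integral_comp_comm X (Matrix m n ℝ) (Matrix m n ℝ) _ μ ℝ _
    Matrix.linftyOpNormedAddCommGroup Matrix.linftyOpNormedSpace Matrix.normedAddCommGroup
    Matrix.normedSpace Matrix.normedSpace Matrix.linftyOpNormedSpace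
    (ContinuousLinearEquiv.refl ℝ _) f).symm

theorem Matrix.linftyOp_intervalIntegral (f : ℝ → Matrix m n ℝ) (a b : ℝ) (μ : Measure ℝ) :
    @intervalIntegral _ Matrix.linftyOpNormedAddCommGroup Matrix.linftyOpNormedSpace f a b μ =
      ∫ x in a..b, f x ∂μ :=
  congrArg₂ (· - ·) (Matrix.linftyOp_integral _ f) (Matrix.linftyOp_integral _ f)

end Matrix

/-- Derivative of the matrix exponential, integral form: for `n×n` real matrices `A, B`,
`t ↦ exp (A + t • B)` is differentiable at `t = 0` with derivative
`∫₀¹ exp (s • A) * B * exp ((1 - s) • A) ds`. -/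
theorem matrix_exp_hasDerivAt_integral
    (n : ℕ) (A B : Matrix (Fin n) (Fin n) ℝ) :
    HasDerivAt (fun t : ℝ => NormedSpace.exp (A + t • B))
      (∫ s in (0:ℝ)..1, NormedSpace.exp (s • A) * B * NormedSpace.exp ((1 - s) • A))
      0 := by
  -- `HasDerivAt` only sees the topology, which the two norms share; the integral must be moved.
  have h := @hasDerivAt_exp_add_smul _ Matrix.linftyOpNormedRing Matrix.linftyOpNormedAlgebra
    (FiniteDimensional.complete ℝ _) A B
  rwa [Matrix.linftyOp_intervalIntegral] at h
end

section
/- Derivative of the matrix exponential (left-Jacobian series form): for n×n real matrices A and B, define ad_A(B) = A·B − B·A and its iterates ad_A^m (with ad_A^0(B) = B). Then the series ∑_{m=0}^{∞} (1/(m+1)!) · ad_A^m(B) converges in the space of n×n real matrices, and the function t ↦ exp(A + t·B) is differentiable at t = 0 with derivative ( ∑_{m=0}^{∞} (1/(m+1)!) · ad_A^m(B) ) · exp(A). -/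
attribute [local instance] Matrix.normedAddCommGroup Matrix.normedSpace

open NormedSpace

/-- The adjoint action `ad_A(B) = A*B − B*A` on `n×n` real matrices. -/
def matAd {n : ℕ} (A : Matrix (Fin n) (Fin n) ℝ) (B : Matrix (Fin n) (Fin n) ℝ) :
    Matrix (Fin n) (Fin n) ℝ :=
  A * B - B * A

/-!
Expand `exp (A + t • B) = 1 + ∑ (A + t • B) ^ (k + 1) / (k + 1)!` and differentiate termwise
(the derivatives are uniformly summable for `‖t‖ < 1`): the derivative at `0` of the `k`-th term
is `∑ᵢ A ^ (k - i) * B * A ^ i / (k + 1)!`. Left multiplication by `A` is `R + ad_A`, where `R` is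
right multiplication by `A` and commutes with `ad_A`, so the binomial theorem rewrites this sum as
`∑ₘ C(k+1, m+1) ad_A^m(B) A^(k-m)`. Since `C(k+1, m+1) / (k+1)! = 1 / ((m+1)! (k-m)!)`, the series
of derivatives is the Cauchy product of `∑ ad_A^m(B) / (m+1)!` with `∑ A^j / j! = exp A`.
-/

open Finset
open LinearMap (mulLeft mulRight)
open scoped Nat

theorem Commute.sum_add_pow_mul_pow_eq_sum_choose {R : Type*} [Semiring R] {y d : R}
    (h : Commute y d) (n : ℕ) :
    ∑ i ∈ range (n + 1), (y + d) ^ (n - i) * y ^ i =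
      ∑ m ∈ range (n + 1), (n + 1).choose (m + 1) • (d ^ m * y ^ (n - m)) := by
  induction n with
  | zero => simp
  | succ n ih =>
    have hshift : ∑ m ∈ range (n + 2), (n + 1).choose (m + 1) • (d ^ m * y ^ (n + 1 - m)) =
        (∑ m ∈ range (n + 1), (n + 1).choose (m + 1) • (d ^ m * y ^ (n - m))) * y := by
      rw [sum_range_succ, Nat.choose_succ_self, zero_smul, add_zero, sum_mul]
      refine sum_congr rfl fun m hm => ?_
      rw [Nat.sub_add_comm (mem_range_succ_iff.mp hm), pow_succ, smul_mul_assoc, mul_assoc]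
    have hbinom : (y + d) ^ (n + 1) =
        ∑ m ∈ range (n + 2), (n + 1).choose m • (d ^ m * y ^ (n + 1 - m)) := by
      simp only [add_comm y d, h.symm.add_pow, nsmul_eq_mul']
    calc ∑ i ∈ range (n + 2), (y + d) ^ (n + 1 - i) * y ^ i
        = (∑ i ∈ range (n + 1), (y + d) ^ (n - i) * y ^ i) * y + (y + d) ^ (n + 1) := by
          rw [sum_range_succ', sum_mul]
          simp only [pow_succ, mul_assoc, Nat.add_sub_add_right, Nat.sub_zero, pow_zero, mul_one]
      _ = ∑ m ∈ range (n + 2), (n + 2).choose (m + 1) • (d ^ m * y ^ (n + 1 - m)) := by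
          simp only [ih, ← hshift, hbinom, ← sum_add_distrib, Nat.choose_succ_succ' (n + 1),
            add_smul, add_comm]

theorem sum_pow_mul_mul_pow_eq_sum_choose_ad {R 𝔸 : Type*} [CommSemiring R] [Ring 𝔸] [Algebra R 𝔸]
    (A B : 𝔸) (n : ℕ) :
    ∑ i ∈ range (n + 1), A ^ (n - i) * B * A ^ i =
      ∑ m ∈ range (n + 1), (n + 1).choose (m + 1) •
        (((mulLeft R A - mulRight R A) ^ m) B * A ^ (n - m)) := by
  have hleft : mulRight R A + (mulLeft R A - mulRight R A) = mulLeft R A := add_sub_cancel _ _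
  have hcomm : Commute (mulRight R A) (mulLeft R A - mulRight R A) :=
    (LinearMap.commute_mulLeft_right A A).symm.sub_right (Commute.refl _)
  have key := congr($(hcomm.sum_add_pow_mul_pow_eq_sum_choose n) B)
  simp only [← (hcomm.pow_pow _ _).eq] at key
  simpa only [hleft, LinearMap.sum_apply, Module.End.mul_apply, LinearMap.pow_mulLeft,
    LinearMap.pow_mulRight, LinearMap.mulLeft_apply, LinearMap.mulRight_apply,
    LinearMap.smul_apply, mul_assoc] using key

section SeminormedRing

variable {𝔸 : Type*} [SeminormedRing 𝔸]

theorem norm_pow_mul_le (X Y : 𝔸) (k : ℕ) : ‖X ^ k * Y‖ ≤ ‖X‖ ^ k * ‖Y‖ := by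
  induction k generalizing Y with
  | zero => simp
  | succ k ih =>
    calc ‖X ^ (k + 1) * Y‖ = ‖X ^ k * (X * Y)‖ := by rw [pow_succ, mul_assoc]
      _ ≤ ‖X‖ ^ k * ‖X * Y‖ := ih _
      _ ≤ ‖X‖ ^ k * (‖X‖ * ‖Y‖) := by gcongr; exact norm_mul_le _ _
      _ = ‖X‖ ^ (k + 1) * ‖Y‖ := by ring

theorem norm_mul_pow_le (X Y : 𝔸) (k : ℕ) : ‖Y * X ^ k‖ ≤ ‖Y‖ * ‖X‖ ^ k := by
  induction k generalizing Y with
  | zero => simp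
  | succ k ih =>
    calc ‖Y * X ^ (k + 1)‖ = ‖(Y * X) * X ^ k‖ := by rw [pow_succ', mul_assoc]
      _ ≤ ‖Y * X‖ * ‖X‖ ^ k := ih _
      _ ≤ (‖Y‖ * ‖X‖) * ‖X‖ ^ k := by gcongr; exact norm_mul_le _ _
      _ = ‖Y‖ * ‖X‖ ^ (k + 1) := by ring

theorem norm_sum_pow_mul_mul_pow_le (X Y : 𝔸) (n : ℕ) :
    ‖∑ i ∈ range (n + 1), X ^ (n - i) * Y * X ^ i‖ ≤ (n + 1) * (‖X‖ ^ n * ‖Y‖) := by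
  have hterm : ∀ i ∈ range (n + 1), ‖X ^ (n - i) * Y * X ^ i‖ ≤ ‖X‖ ^ n * ‖Y‖ := by
    intro i hi
    calc ‖X ^ (n - i) * Y * X ^ i‖ ≤ ‖X‖ ^ (n - i) * ‖Y‖ * ‖X‖ ^ i :=
          (norm_mul_pow_le _ _ _).trans (by gcongr; exact norm_pow_mul_le _ _ _)
      _ = ‖X‖ ^ n * ‖Y‖ := by
          rw [mul_right_comm, ← pow_add, Nat.sub_add_cancel (mem_range_succ_iff.mp hi)]
  calc _ ≤ ∑ i ∈ range (n + 1), ‖X ^ (n - i) * Y * X ^ i‖ := norm_sum_le _ _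
    _ ≤ ∑ i ∈ range (n + 1), ‖X‖ ^ n * ‖Y‖ := sum_le_sum hterm
    _ = (n + 1) * (‖X‖ ^ n * ‖Y‖) := by simp

theorem norm_ad_pow_apply_le {R : Type*} [CommSemiring R] [Algebra R 𝔸] (A B : 𝔸) (m : ℕ) :
    ‖((mulLeft R A - mulRight R A) ^ m) B‖ ≤ (2 * ‖A‖) ^ m * ‖B‖ := by
  induction m with
  | zero => simp
  | succ m ih =>
    set X := ((mulLeft R A - mulRight R A) ^ m) B
    calc ‖((mulLeft R A - mulRight R A) ^ (m + 1)) B‖ = ‖A * X - X * A‖ := by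
          rw [pow_succ', Module.End.mul_apply, LinearMap.sub_apply, LinearMap.mulLeft_apply,
            LinearMap.mulRight_apply]
      _ ≤ ‖A‖ * ‖X‖ + ‖X‖ * ‖A‖ :=
          (norm_sub_le _ _).trans (add_le_add (norm_mul_le _ _) (norm_mul_le _ _))
      _ = 2 * ‖A‖ * ‖X‖ := by ring
      _ ≤ 2 * ‖A‖ * ((2 * ‖A‖) ^ m * ‖B‖) := by gcongr
      _ = (2 * ‖A‖) ^ (m + 1) * ‖B‖ := by ring

theorem summable_norm_inv_factorial_succ_smul_ad_pow {𝕂 : Type*} [RCLike 𝕂] [NormedAlgebra 𝕂 𝔸]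
    (A B : 𝔸) :
    Summable fun m : ℕ => ‖((m + 1)! : 𝕂)⁻¹ • ((mulLeft 𝕂 A - mulRight 𝕂 A) ^ m) B‖ := by
  refine .of_nonneg_of_le (fun _ => norm_nonneg _) (fun m => ?_)
    ((Real.summable_pow_div_factorial (2 * ‖A‖)).mul_right ‖B‖)
  rw [norm_smul, norm_inv, RCLike.norm_natCast, div_eq_inv_mul, mul_assoc]
  gcongr
  · exact Nat.le_succ m
  · exact norm_ad_pow_apply_le A B m

end SeminormedRing

section NormedRing

variable {𝔸 𝕂 : Type*} [NormedRing 𝔸] [RCLike 𝕂] [NormedAlgebra 𝕂 𝔸] [CompleteSpace 𝔸]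

theorem tsum_inv_factorial_succ_smul_sum_pow_mul_mul_pow (A B : 𝔸) :
    ∑' k : ℕ, ((k + 1)! : 𝕂)⁻¹ • ∑ i ∈ range (k + 1), A ^ (k - i) * B * A ^ i =
      (∑' m : ℕ, ((m + 1)! : 𝕂)⁻¹ • ((mulLeft 𝕂 A - mulRight 𝕂 A) ^ m) B) * exp A := by
  rw [exp_eq_tsum 𝕂, tsum_mul_tsum_eq_tsum_sum_range_of_summable_norm
    (summable_norm_inv_factorial_succ_smul_ad_pow A B) (norm_expSeries_summable' A)]
  refine tsum_congr fun k => ?_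
  rw [sum_pow_mul_mul_pow_eq_sum_choose_ad (R := 𝕂), smul_sum]
  refine sum_congr rfl fun m hm => ?_
  have hmk : m + 1 ≤ k + 1 := by simpa using mem_range.mp hm
  have hcoeff :
      ((k + 1)! : 𝕂)⁻¹ * (k + 1).choose (m + 1) = ((m + 1)! : 𝕂)⁻¹ * ((k - m)! : 𝕂)⁻¹ := by
    rw [Nat.cast_choose 𝕂 hmk, Nat.add_sub_add_right]
    have : ((k + 1)! : 𝕂) ≠ 0 := Nat.cast_ne_zero.mpr (Nat.factorial_ne_zero _)
    field_simp
  rw [smul_mul_smul_comm, ← hcoeff, mul_smul, Nat.cast_smul_eq_nsmul]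

theorem exp_eq_one_add_tsum (X : 𝔸) :
    exp X = 1 + ∑' k : ℕ, ((k + 1)! : 𝕂)⁻¹ • X ^ (k + 1) := by
  simp only [exp_eq_tsum 𝕂]
  rw [(expSeries_summable' X).tsum_eq_zero_add]
  simp

theorem hasDerivAt_exp_add_smul_s4 (A B : 𝔸) :
    HasDerivAt (fun t : 𝕂 => exp (A + t • B))
      (∑' k : ℕ, ((k + 1)! : 𝕂)⁻¹ • ∑ i ∈ range (k + 1), A ^ (k - i) * B * A ^ i) 0 := by
  let term (k : ℕ) (t : 𝕂) : 𝔸 := ((k + 1)! : 𝕂)⁻¹ • (A + t • B) ^ (k + 1)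
  let term' (k : ℕ) (t : 𝕂) : 𝔸 :=
    ((k + 1)! : 𝕂)⁻¹ • ∑ i ∈ range (k + 1), (A + t • B) ^ (k - i) * B * (A + t • B) ^ i
  have hderiv : ∀ k t, HasDerivAt (term k) (term' k t) t := fun k t => by
    have hline : HasDerivAt (fun t : 𝕂 => A + t • B) B t := by
      simpa using ((hasDerivAt_id t).smul_const B).const_add A
    exact (hline.fun_pow' (k + 1)).const_smul (((k + 1)! : 𝕂)⁻¹)
  have hbound : ∀ k, ∀ t ∈ Metric.ball (0 : 𝕂) 1,
      ‖term' k t‖ ≤ (‖A‖ + ‖B‖) ^ k / k ! * ‖B‖ := fun k t ht => by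
    have hline : ‖A + t • B‖ ≤ ‖A‖ + ‖B‖ := by
      refine (norm_add_le _ _).trans (add_le_add le_rfl ?_)
      rw [norm_smul]
      exact mul_le_of_le_one_left (norm_nonneg _) (mem_ball_zero_iff.mp ht).le
    calc ‖term' k t‖ ≤ ((k + 1)! : ℝ)⁻¹ * ((k + 1) * (‖A + t • B‖ ^ k * ‖B‖)) := by
          rw [norm_smul, norm_inv, RCLike.norm_natCast]
          gcongr
          exact norm_sum_pow_mul_mul_pow_le _ _ k
      _ = ‖A + t • B‖ ^ k / k ! * ‖B‖ := by
          rw [Nat.factorial_succ]; push_cast; field_simp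
      _ ≤ (‖A‖ + ‖B‖) ^ k / k ! * ‖B‖ := by gcongr
  have hsum0 : Summable fun k => term k 0 := by
    simpa [term] using (summable_nat_add_iff 1).mpr (expSeries_summable' (𝕂 := 𝕂) A)
  simp only [exp_eq_one_add_tsum (𝕂 := 𝕂) (A + _ • B)]
  simpa [term'] using (hasDerivAt_tsum_of_isPreconnected
    ((Real.summable_pow_div_factorial _).mul_right ‖B‖) Metric.isOpen_ball
    (convex_ball 0 1).isPreconnected (fun k t _ => hderiv k t) hbound
    (Metric.mem_ball_self one_pos) hsum0 (Metric.mem_ball_self one_pos)).const_add 1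

theorem summable_and_hasDerivAt_exp_add_smul (A B : 𝔸) :
    Summable (fun m : ℕ => ((m + 1)! : 𝕂)⁻¹ • ((mulLeft 𝕂 A - mulRight 𝕂 A) ^ m) B) ∧
      HasDerivAt (fun t : 𝕂 => exp (A + t • B))
        ((∑' m : ℕ, ((m + 1)! : 𝕂)⁻¹ • ((mulLeft 𝕂 A - mulRight 𝕂 A) ^ m) B) * exp A) 0 :=
  ⟨(summable_norm_inv_factorial_succ_smul_ad_pow A B).of_norm,
    tsum_inv_factorial_succ_smul_sum_pow_mul_mul_pow (𝕂 := 𝕂) A B ▸ hasDerivAt_exp_add_smul_s4 A B⟩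

end NormedRing

/-- Derivative of the matrix exponential, left-Jacobian series form: the series
`∑ₘ ad_A^m(B) / (m+1)!` converges, and `t ↦ exp (A + t • B)` is differentiable at `t = 0`
with derivative `(∑ₘ ad_A^m(B) / (m+1)!) * exp A`. -/
theorem matrix_exp_hasDerivAt_leftJacobian
    (n : ℕ) (A B : Matrix (Fin n) (Fin n) ℝ) :
    Summable (fun m : ℕ => (((m + 1).factorial : ℝ))⁻¹ • (matAd A)^[m] B) ∧
    HasDerivAt (fun t : ℝ => NormedSpace.exp (A + t • B))
      ((∑' m : ℕ, (((m + 1).factorial : ℝ))⁻¹ • (matAd A)^[m] B) * NormedSpace.exp A)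
      0 := by
  -- The entrywise sup norm is not submultiplicative; the ℓ∞-operator norm is, and it induces the
  -- same topology, so `Summable` and `HasDerivAt` can be read in that Banach algebra.
  let _ := Matrix.linftyOpNormedRing (n := Fin n) (α := ℝ)
  let _ := Matrix.linftyOpNormedAlgebra (R := ℝ) (n := Fin n) (α := ℝ)
  have hAd : ∀ m, (matAd A)^[m] = ⇑((mulLeft ℝ A - mulRight ℝ A) ^ m) :=
    fun m => by rw [Module.End.coe_pow]; rfl
  simp only [hAd]
  exact @summable_and_hasDerivAt_exp_add_smul _ ℝ _ _ _ (FiniteDimensional.complete ℝ _) A B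
end

section
/- Signed distance of the 2-D cone, slanted-edge region: fix h > 0 and ψ ∈ (0, π/2), set p* = h/(1 + sin ψ), define l̄₁(x) = −(x − h)/tan ψ + h·tan ψ for x ≤ h, and define l̲₁(x) = −x/tan ψ for x ≤ 0, l̲₁(x) = 0 for 0 ≤ x ≤ p*, and l̲₁(x) = tan(π/4 + ψ/2)·x − h/cos ψ for p* ≤ x ≤ h. Let D₁ = {(x, y) ∈ ℝ² : x ≤ h and l̲₁(x) < y < l̄₁(x)}. Then for every q = (x, y) ∈ D₁, the distance from q to the frontier ∂F satisfies infDist(q, ∂F) = |−x + y/tan ψ| / √(1 + 1/tan²ψ); moreover −x + y/tan ψ ≤ 0 if and only if q ∈ F, so the signed distance of q to F equals (a₁·q)/‖a₁‖ with a₁ = (−1, 1/tan ψ). -/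
/-! Write `S = q 1 * cos ψ - q 0 * sin ψ` for the signed distance from `q` to the line carrying
the upper edge of `F`; then `-q 0 + q 1 / tan ψ = S / sin ψ` and `‖a₁‖ = 1 / sin ψ`. On `D₁` the
foot of the perpendicular from `q` to that line lies on the upper edge, which gives
`infDist q ∂F ≤ |S|`. Conversely, if `S ≥ 0` then no point of `F` is closer than `S`, as `F` lies
in the half-plane on the other side of that line; and if `S < 0` then the ball of radius `-S`
about `q` lies in `F`, because on `D₁` the lower and the vertical edge are at least as far from
`q` as the upper edge line. -/

open scoped RealInnerProductSpace

/-- The signed distance function of a set `F`: `−infDist(q, ∂F)` inside `F` and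
`+infDist(q, ∂F)` outside `F`. -/
noncomputable def coneSignedDist (F : Set (EuclideanSpace ℝ (Fin 2)))
    (q : EuclideanSpace ℝ (Fin 2)) : ℝ :=
  open scoped Classical in
  if q ∈ F then -Metric.infDist q (frontier F) else Metric.infDist q (frontier F)

open Real Metric Set Filter Topology

section InnerProductSpace

variable {V : Type*} [NormedAddCommGroup V] [InnerProductSpace ℝ V]

lemma inner_sub_le_dist {u : V} (hu : ‖u‖ = 1) (q p : V) : ⟪q - p, u⟫ ≤ dist q p := by
  simpa [hu, dist_eq_norm] using real_inner_le_norm (q - p) u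

lemma mem_frontier_of_inner_eq_zero {F : Set V} {n x : V} (hn : n ≠ 0)
    (hF : F ⊆ {p | ⟪p, n⟫ ≤ 0}) (hxF : x ∈ F) (hx : ⟪x, n⟫ = 0) : x ∈ frontier F := by
  rw [frontier_eq_closure_inter_closure]
  refine ⟨subset_closure hxF,
    mem_closure_of_tendsto (b := 𝓝[>] (0 : ℝ)) (f := fun ε => x + ε • n) ?_ ?_⟩
  · exact ((Continuous.tendsto (by fun_prop) 0).mono_left nhdsWithin_le_nhds).trans_eq (by simp)
  · filter_upwards [self_mem_nhdsWithin] with ε (hε : 0 < ε) hεF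
    have hle := hF hεF
    simp only [mem_ofPred_eq, inner_add_left, hx, real_inner_smul_left,
      real_inner_self_eq_norm_sq, zero_add] at hle
    have : 0 < ε * ‖n‖ ^ 2 := by have := norm_pos_iff.2 hn; positivity
    linarith

lemma inner_le_infDist_frontier {F : Set V} {n : V} (hn : ‖n‖ = 1) (hF : F ⊆ {p | ⟪p, n⟫ ≤ 0})
    (hne : (frontier F).Nonempty) (q : V) : ⟪q, n⟫ ≤ infDist q (frontier F) := by
  refine (le_infDist hne).2 fun p hp => ?_
  have hpn : ⟪p, n⟫ ≤ 0 := closure_minimal hF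
    (isClosed_le (f := fun p : V => ⟪p, n⟫) (by fun_prop) continuous_const)
    (frontier_subset_closure hp)
  linarith [inner_sub_le_dist hn q p, inner_sub_left (𝕜 := ℝ) q p n]

end InnerProductSpace

lemma le_infDist_frontier_of_ball_subset {X : Type*} [PseudoMetricSpace X] {F : Set X} {q : X}
    {r : ℝ} (hne : (frontier F).Nonempty) (hball : ball q r ⊆ F) :
    r ≤ infDist q (frontier F) :=
  (le_infDist hne).2 fun _ hp => not_lt.1 fun hlt =>
    hp.2 (interior_maximal hball isOpen_ball (mem_ball'.2 hlt))

lemma Real.tan_pi_div_four_add_half {ψ : ℝ} (hψ : cos ψ ≠ 0) :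
    tan (π / 4 + ψ / 2) = (1 + sin ψ) / cos ψ := by
  set u := π / 4 + ψ / 2
  have hu : 2 * u = ψ + π / 2 := by ring
  have hcos : cos ψ = 2 * sin u * cos u := by rw [← sin_add_pi_div_two, ← hu, sin_two_mul]
  have hsin : 1 + sin ψ = 2 * sin u ^ 2 := by
    have := cos_add_pi_div_two ψ
    rw [← hu, cos_two_mul_eq_one_sub] at this
    linarith
  have hu0 : cos u ≠ 0 := fun h0 => hψ (by rw [hcos, h0, mul_zero])
  rw [tan_eq_sin_div_cos, div_eq_div_iff hu0 hψ, hcos, hsin]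
  ring

local notation "ℝ²" => EuclideanSpace ℝ (Fin 2)

namespace EuclideanSpace

lemma inner_toLp_fin_two (v : ℝ²) (a b : ℝ) : ⟪v, !₂[a, b]⟫ = v 0 * a + v 1 * b := by
  simp [PiLp.inner_apply, Fin.sum_univ_two, mul_comm]

lemma norm_toLp_fin_two (a b : ℝ) : ‖!₂[a, b]‖ = √(a ^ 2 + b ^ 2) := by
  simp [EuclideanSpace.norm_eq, Fin.sum_univ_two]

lemma norm_toLp_fin_two_eq_one {a b : ℝ} (h : a ^ 2 + b ^ 2 = 1) : ‖!₂[a, b]‖ = 1 := by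
  rw [norm_toLp_fin_two, h, sqrt_one]

end EuclideanSpace

open EuclideanSpace

def fieldOfView (h ψ : ℝ) : Set ℝ² := {q | |q 1| ≤ tan ψ * q 0 ∧ q 0 ≤ h}

lemma mem_fieldOfView_iff {h ψ : ℝ} (hc : 0 < cos ψ) {q : ℝ²} :
    q ∈ fieldOfView h ψ ↔
      q 1 * cos ψ - q 0 * sin ψ ≤ 0 ∧ 0 ≤ q 0 * sin ψ + q 1 * cos ψ ∧ q 0 ≤ h := by
  rw [fieldOfView, mem_ofPred_eq, abs_le, tan_eq_sin_div_cos, div_mul_eq_mul_div, neg_le,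
    le_div_iff₀ hc, le_div_iff₀ hc]
  constructor
  · rintro ⟨⟨hl, hu⟩, hh⟩; exact ⟨by linarith, by linarith, hh⟩
  · rintro ⟨hu, hl, hh⟩; exact ⟨⟨by linarith, by linarith⟩, hh⟩

noncomputable def upperNormal (ψ : ℝ) : ℝ² := !₂[-sin ψ, cos ψ]

lemma inner_upperNormal (ψ : ℝ) (p : ℝ²) : ⟪p, upperNormal ψ⟫ = p 1 * cos ψ - p 0 * sin ψ := by
  rw [upperNormal, inner_toLp_fin_two]; ring

lemma norm_upperNormal (ψ : ℝ) : ‖upperNormal ψ‖ = 1 :=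
  norm_toLp_fin_two_eq_one (by rw [neg_sq, sin_sq_add_cos_sq])

lemma fieldOfView_subset_inner_upperNormal_nonpos {h ψ : ℝ} (hc : 0 < cos ψ) :
    fieldOfView h ψ ⊆ {p | ⟪p, upperNormal ψ⟫ ≤ 0} := fun p hp => by
  rw [mem_ofPred_eq, inner_upperNormal]; exact ((mem_fieldOfView_iff hc).1 hp).1

lemma smul_mem_frontier_fieldOfView {h ψ t : ℝ} (hs : 0 ≤ sin ψ) (hc : 0 < cos ψ) (ht : 0 ≤ t)
    (htc : t * cos ψ ≤ h) : t • !₂[cos ψ, sin ψ] ∈ frontier (fieldOfView h ψ) := by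
  have h0 : (t • !₂[cos ψ, sin ψ]) 0 = t * cos ψ := rfl
  have h1 : (t • !₂[cos ψ, sin ψ]) 1 = t * sin ψ := rfl
  refine mem_frontier_of_inner_eq_zero (norm_ne_zero_iff.1 ((norm_upperNormal ψ) ▸ one_ne_zero))
    (fieldOfView_subset_inner_upperNormal_nonpos hc) ?_ ?_
  · rw [mem_fieldOfView_iff hc, h0, h1]
    have := mul_nonneg (mul_nonneg ht hc.le) hs
    exact ⟨by linarith [mul_comm (t * cos ψ) (sin ψ)], by linarith, htc⟩
  · rw [inner_upperNormal, h0, h1]; ring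

lemma ball_subset_fieldOfView {h ψ : ℝ} (hc : 0 < cos ψ) {q : ℝ²} (hy : 0 ≤ q 1)
    (hvert : q 0 * sin ψ - q 1 * cos ψ ≤ h - q 0) :
    ball q (q 0 * sin ψ - q 1 * cos ψ) ⊆ fieldOfView h ψ := fun p hp => by
  rw [mem_ball] at hp
  have hupper : ⟪p - q, upperNormal ψ⟫ ≤ dist p q := inner_sub_le_dist (norm_upperNormal ψ) p q
  have hlower : (q 0 - p 0) * sin ψ + (q 1 - p 1) * cos ψ ≤ dist p q := by
    rw [dist_comm]
    simpa [inner_toLp_fin_two] using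
      inner_sub_le_dist (norm_toLp_fin_two_eq_one (sin_sq_add_cos_sq ψ)) q p
  have hvertical : p 0 - q 0 ≤ dist p q := by
    simpa [inner_toLp_fin_two] using
      inner_sub_le_dist (norm_toLp_fin_two_eq_one (a := 1) (b := 0) (by norm_num)) p q
  rw [inner_sub_left, inner_upperNormal, inner_upperNormal] at hupper
  rw [mem_fieldOfView_iff hc]
  exact ⟨by linarith, by nlinarith, by linarith⟩

/-- `q 0 * cos ψ + q 1 * sin ψ` is the position of the foot of the perpendicular from `q` along
the upper edge. -/
theorem infDist_frontier_fieldOfView {h ψ : ℝ} (hs : 0 ≤ sin ψ) (hc : 0 < cos ψ) {q : ℝ²}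
    (hy : 0 ≤ q 1) (ht : 0 ≤ q 0 * cos ψ + q 1 * sin ψ)
    (htc : (q 0 * cos ψ + q 1 * sin ψ) * cos ψ ≤ h)
    (hvert : q 0 * sin ψ - q 1 * cos ψ ≤ h - q 0) :
    infDist q (frontier (fieldOfView h ψ)) = |q 1 * cos ψ - q 0 * sin ψ| := by
  set t := q 0 * cos ψ + q 1 * sin ψ
  have hfoot := smul_mem_frontier_fieldOfView hs hc ht htc
  have hdist : dist q (t • !₂[cos ψ, sin ψ]) = |⟪q, upperNormal ψ⟫| := by
    have hq_sub_foot : q - t • !₂[cos ψ, sin ψ] = ⟪q, upperNormal ψ⟫ • upperNormal ψ := by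
      ext i; fin_cases i
      · change q 0 - t * cos ψ = ⟪q, upperNormal ψ⟫ * -sin ψ
        rw [inner_upperNormal]; linear_combination (-q 0) * sin_sq_add_cos_sq ψ
      · change q 1 - t * sin ψ = ⟪q, upperNormal ψ⟫ * cos ψ
        rw [inner_upperNormal]; linear_combination (-q 1) * sin_sq_add_cos_sq ψ
    rw [dist_eq_norm, hq_sub_foot, norm_smul, norm_upperNormal, mul_one, Real.norm_eq_abs]
  rw [← inner_upperNormal]
  refine le_antisymm ((infDist_le_dist_of_mem hfoot).trans_eq hdist) ?_
  rcases le_or_gt 0 ⟪q, upperNormal ψ⟫ with hS | hS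
  · rw [abs_of_nonneg hS]
    exact inner_le_infDist_frontier (norm_upperNormal ψ)
      (fieldOfView_subset_inner_upperNormal_nonpos hc) ⟨_, hfoot⟩ q
  · rw [abs_of_neg hS, inner_upperNormal, neg_sub]
    exact le_infDist_frontier_of_ball_subset ⟨_, hfoot⟩ (ball_subset_fieldOfView hc hy hvert)

/-- The three conclusions say that `q = (x, y)` lies above the axis of the cone, that the foot of
its perpendicular on the upper edge line lies beyond the apex, and that `q` is at least as close
to that line as to the vertical edge. -/
lemma pos_and_pos_and_le_of_lowerBoundary_lt {h ψ : ℝ} (hs : 0 < sin ψ) (hc : 0 < cos ψ)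
    {llow : ℝ → ℝ} (hlow₁ : ∀ x ≤ (0:ℝ), llow x = -x / tan ψ)
    (hlow₂ : ∀ x, 0 ≤ x → x ≤ h / (1 + sin ψ) → llow x = 0)
    (hlow₃ : ∀ x, h / (1 + sin ψ) ≤ x → x ≤ h →
      llow x = tan (π / 4 + ψ / 2) * x - h / cos ψ)
    {x y : ℝ} (hx : x ≤ h) (hy : llow x < y) :
    0 < y ∧ 0 < x * cos ψ + y * sin ψ ∧ x * sin ψ - y * cos ψ ≤ h - x := by
  rcases le_or_gt x 0 with hx0 | hx0
  · rw [hlow₁ x hx0, tan_eq_sin_div_cos, div_div_eq_mul_div, div_lt_iff₀ hs] at hy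
    have hy0 : 0 < y := by nlinarith
    exact ⟨hy0, by linarith, by nlinarith⟩
  have hs1 : 0 < 1 + sin ψ := by linarith
  rcases le_total x (h / (1 + sin ψ)) with hxp | hxp
  · rw [hlow₂ x hx0.le hxp] at hy
    rw [le_div_iff₀ hs1] at hxp
    exact ⟨hy, by positivity, by nlinarith⟩
  · rw [hlow₃ x hxp hx, tan_pi_div_four_add_half hc.ne', div_mul_eq_mul_div, ← sub_div,
      div_lt_iff₀ hc] at hy
    rw [div_le_iff₀ hs1] at hxp
    have hy0 : 0 < y := by nlinarith
    exact ⟨hy0, by positivity, by linarith⟩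

lemma foot_lt_of_lt_upperBoundary {h ψ : ℝ} (hs : 0 < sin ψ) (hc : 0 < cos ψ)
    {lbar : ℝ → ℝ} (hlbar : ∀ x ≤ h, lbar x = -(x - h) / tan ψ + h * tan ψ)
    {x y : ℝ} (hx : x ≤ h) (hy : y < lbar x) : (x * cos ψ + y * sin ψ) * cos ψ < h := by
  have hbar : -(x - h) / tan ψ + h * tan ψ =
      ((h - x) * cos ψ ^ 2 + h * sin ψ ^ 2) / (sin ψ * cos ψ) := by
    rw [tan_eq_sin_div_cos]; field_simp; ring
  rw [hlbar x hx, hbar, lt_div_iff₀ (by positivity)] at hy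
  linear_combination hy + h * sin_sq_add_cos_sq ψ

lemma neg_add_div_tan_eq {ψ : ℝ} (hs : sin ψ ≠ 0) (x y : ℝ) :
    -x + y / tan ψ = (y * cos ψ - x * sin ψ) / sin ψ := by
  rw [tan_eq_sin_div_cos, div_div_eq_mul_div]; field_simp; ring

lemma sqrt_one_add_one_div_tan_sq {ψ : ℝ} (hs : 0 < sin ψ) :
    √(1 + 1 / tan ψ ^ 2) = 1 / sin ψ := by
  rw [tan_eq_sin_div_cos, div_pow, one_div_div, ← sqrt_sq (by positivity : 0 ≤ 1 / sin ψ)]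
  congr 1; field_simp; linarith [sin_sq_add_cos_sq ψ]

theorem sdf_cone_slanted_edge_region_general
    (h ψ : ℝ) (hψ : ψ ∈ Set.Ioo 0 (Real.pi / 2))
    (F : Set (EuclideanSpace ℝ (Fin 2)))
    (hF : F = {q : EuclideanSpace ℝ (Fin 2) | |q 1| ≤ Real.tan ψ * q 0 ∧ q 0 ≤ h})
    (pstar : ℝ) (hpstar : pstar = h / (1 + Real.sin ψ))
    (lbar llow : ℝ → ℝ)
    (hlbar : ∀ x ≤ h, lbar x = -(x - h) / Real.tan ψ + h * Real.tan ψ)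
    (hlow₁ : ∀ x ≤ (0:ℝ), llow x = -x / Real.tan ψ)
    (hlow₂ : ∀ x, 0 ≤ x → x ≤ pstar → llow x = 0)
    (hlow₃ : ∀ x, pstar ≤ x → x ≤ h →
      llow x = Real.tan (Real.pi / 4 + ψ / 2) * x - h / Real.cos ψ)
    (D₁ : Set (EuclideanSpace ℝ (Fin 2)))
    (hD₁ : D₁ = {q : EuclideanSpace ℝ (Fin 2) |
      q 0 ≤ h ∧ llow (q 0) < q 1 ∧ q 1 < lbar (q 0)})
    (a₁ : EuclideanSpace ℝ (Fin 2))
    (ha₁ : a₁ = (WithLp.equiv 2 (Fin 2 → ℝ)).symm ![-1, 1 / Real.tan ψ]) :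
    ∀ q ∈ D₁,
      Metric.infDist q (frontier F) =
        |-(q 0) + q 1 / Real.tan ψ| / Real.sqrt (1 + 1 / Real.tan ψ ^ 2) ∧
      (-(q 0) + q 1 / Real.tan ψ ≤ 0 ↔ q ∈ F) ∧
      coneSignedDist F q = ⟪a₁, q⟫ / ‖a₁‖ := by
  obtain ⟨hψ0, hψ2⟩ := hψ
  have hs : 0 < sin ψ := sin_pos_of_pos_of_lt_pi hψ0 (by linarith [pi_pos])
  have hc : 0 < cos ψ := cos_pos_of_mem_Ioo ⟨by linarith [pi_pos], hψ2⟩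
  obtain rfl : F = fieldOfView h ψ := hF
  obtain rfl : a₁ = !₂[-1, 1 / tan ψ] := ha₁
  subst hpstar hD₁
  rintro q ⟨hx, hlow, hup⟩
  obtain ⟨hy, ht, hvert⟩ := pos_and_pos_and_le_of_lowerBoundary_lt hs hc hlow₁ hlow₂ hlow₃ hx hlow
  have hdist := infDist_frontier_fieldOfView hs.le hc hy.le ht.le
    (foot_lt_of_lt_upperBoundary hs hc hlbar hx hup).le hvert
  set S := q 1 * cos ψ - q 0 * sin ψ
  have hmem : q ∈ fieldOfView h ψ ↔ S ≤ 0 :=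
    (mem_fieldOfView_iff hc).trans ⟨fun hq => hq.1, fun hS => ⟨hS, by nlinarith, hx⟩⟩
  have hlin : -(q 0) + q 1 / tan ψ = S / sin ψ := neg_add_div_tan_eq hs.ne' _ _
  have hsqrt := sqrt_one_add_one_div_tan_sq hs
  have hinner : ⟪!₂[-1, 1 / tan ψ], q⟫ = -(q 0) + q 1 / tan ψ := by
    rw [real_inner_comm, inner_toLp_fin_two]; ring
  have hnorm : ‖!₂[-1, 1 / tan ψ]‖ = √(1 + 1 / tan ψ ^ 2) := by
    rw [norm_toLp_fin_two, neg_one_sq, div_pow, one_pow]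
  have hS : S / sin ψ / (1 / sin ψ) = S := by field_simp
  refine ⟨?_, by rw [hlin, div_le_iff₀ hs, zero_mul, hmem], ?_⟩
  · rw [hdist, hlin, hsqrt, abs_div, abs_of_pos hs]; field_simp
  · rw [hinner, hnorm, hlin, hsqrt, hS, coneSignedDist, hdist]
    split_ifs with hq
    · rw [abs_of_nonpos (hmem.1 hq), neg_neg]
    · exact abs_of_pos (not_le.1 (hmem.not.1 hq))

/-- Signed distance of the 2-D cone, slanted-edge region `D₁`: for
`q = (x, y) ∈ D₁ = {(x,y) : x ≤ h, l̲₁(x) < y < l̄₁(x)}`, the distance from `q` to the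
frontier of `F` is `|−x + y/tan ψ| / √(1 + 1/tan²ψ)`; moreover `−x + y/tan ψ ≤ 0`
iff `q ∈ F`, so the signed distance of `q` to `F` equals `(a₁·q)/‖a₁‖` with
`a₁ = (−1, 1/tan ψ)`. -/
theorem sdf_cone_slanted_edge_region
    (h ψ : ℝ) (hh : 0 < h) (hψ : ψ ∈ Set.Ioo 0 (Real.pi / 2))
    (F : Set (EuclideanSpace ℝ (Fin 2)))
    (hF : F = {q : EuclideanSpace ℝ (Fin 2) | |q 1| ≤ Real.tan ψ * q 0 ∧ q 0 ≤ h})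
    (pstar : ℝ) (hpstar : pstar = h / (1 + Real.sin ψ))
    (lbar llow : ℝ → ℝ)
    (hlbar : ∀ x ≤ h, lbar x = -(x - h) / Real.tan ψ + h * Real.tan ψ)
    (hlow₁ : ∀ x ≤ (0:ℝ), llow x = -x / Real.tan ψ)
    (hlow₂ : ∀ x, 0 ≤ x → x ≤ pstar → llow x = 0)
    (hlow₃ : ∀ x, pstar ≤ x → x ≤ h →
      llow x = Real.tan (Real.pi / 4 + ψ / 2) * x - h / Real.cos ψ)
    (D₁ : Set (EuclideanSpace ℝ (Fin 2)))
    (hD₁ : D₁ = {q : EuclideanSpace ℝ (Fin 2) |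
      q 0 ≤ h ∧ llow (q 0) < q 1 ∧ q 1 < lbar (q 0)})
    (a₁ : EuclideanSpace ℝ (Fin 2))
    (ha₁ : a₁ = (WithLp.equiv 2 (Fin 2 → ℝ)).symm ![-1, 1 / Real.tan ψ]) :
    ∀ q ∈ D₁,
      Metric.infDist q (frontier F) =
        |-(q 0) + q 1 / Real.tan ψ| / Real.sqrt (1 + 1 / Real.tan ψ ^ 2) ∧
      (-(q 0) + q 1 / Real.tan ψ ≤ 0 ↔ q ∈ F) ∧
      coneSignedDist F q = ⟪a₁, q⟫ / ‖a₁‖ :=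
  sdf_cone_slanted_edge_region_general h ψ hψ F hF pstar hpstar lbar llow hlbar hlow₁ hlow₂ hlow₃ D₁
    hD₁ a₁ ha₁
end

section
/- Signed distance of the 2-D cone, upper corner region: fix h > 0 and ψ ∈ (0, π/2), and define l̄₁(x) = −(x − h)/tan ψ + h·tan ψ for x ≤ h and l̄₁(x) = h·tan ψ for x ≥ h. Let P₁ = {(x, y) ∈ ℝ² : y > l̄₁(x)}. Then every q ∈ P₁ lies outside F, and the distance from q to the frontier ∂F satisfies infDist(q, ∂F) = ‖q − q₁‖, where q₁ = (h, h·tan ψ) is the upper corner of the triangle F. -/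
/-!
Write `t = tan ψ`, `q₁ = (h, h t)` and `q = (x, y)`. Every `p ∈ F` has `p₀ - h ≤ 0` and
`p₁ - h t ≤ t (p₀ - h)`, so `⟪q - q₁, p - q₁⟫ ≤ 0` whenever `q - q₁` lies in the normal cone
spanned by `(1, 0)` and `(-t, 1)`, i.e. `h t ≤ y` and `0 ≤ (x - h) + t (y - h t)`; this cone
is the closure of `P₁`. Such an obtuse angle at `q₁` makes `q₁` the nearest point of `F` to `q`,
and `q₁` is a frontier point of `F` because the coordinate `p ↦ p₀` attains its maximum over
`F` there.
-/

open Metric Set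

section InnerProductSpace

variable {E : Type*} [NormedAddCommGroup E] [InnerProductSpace ℝ E] {F : Set E} {q c : E}

theorem dist_le_dist_of_inner_sub_nonpos (hq : ∀ p ∈ F, inner ℝ (q - c) (p - c) ≤ 0)
    {p : E} (hp : p ∈ F) : dist q c ≤ dist q p := by
  have hsq : ‖q - p‖ ^ 2 = ‖q - c‖ ^ 2 - 2 * inner ℝ (q - c) (p - c) + ‖p - c‖ ^ 2 := by
    rw [← norm_sub_sq_real, sub_sub_sub_cancel_right]
  rw [dist_eq_norm, dist_eq_norm]
  nlinarith [hq p hp, norm_nonneg (q - c), norm_nonneg (q - p), sq_nonneg ‖p - c‖]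

theorem notMem_of_inner_sub_nonpos (hq : ∀ p ∈ F, inner ℝ (q - c) (p - c) ≤ 0)
    (hqc : q ≠ c) : q ∉ F := fun hqF =>
  hqc (sub_eq_zero.mp (real_inner_self_nonpos.mp (hq q hqF)))

end InnerProductSpace

theorem mem_frontier_of_isMaxOn {X : Type*} [TopologicalSpace X] {f : X → ℝ}
    (hf : IsOpenMap f) (hfc : Continuous f) {F : Set X} {c : X} (hc : c ∈ F)
    (hmax : IsMaxOn f F c) : c ∈ frontier F := by
  refine ⟨subset_closure hc, fun hint => ?_⟩
  have hsub : F ⊆ f ⁻¹' Iic (f c) := fun x hx => hmax hx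
  have : c ∈ f ⁻¹' interior (Iic (f c)) := by
    rw [hf.preimage_interior_eq_interior_preimage hfc]
    exact interior_mono hsub hint
  simp only [interior_Iic, mem_preimage, mem_Iio, lt_irrefl] at this

theorem infDist_frontier_eq_dist {X : Type*} [PseudoMetricSpace X] {F : Set X} {q c : X}
    (hF : IsClosed F) (hc : c ∈ frontier F) (hmin : ∀ p ∈ F, dist q c ≤ dist q p) :
    infDist q (frontier F) = dist q c :=
  le_antisymm (infDist_le_dist_of_mem hc) <|
    (le_infDist ⟨c, hc⟩).mpr fun _ hp => hmin _ (hF.frontier_subset hp)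

section ConeTriangle

local notation "ℝ²" => EuclideanSpace ℝ (Fin 2)

def coneTriangle (h t : ℝ) : Set ℝ² := {q | |q 1| ≤ t * q 0 ∧ q 0 ≤ h}

variable {h t : ℝ} {q c : ℝ²}

theorem isClosed_coneTriangle : IsClosed (coneTriangle h t) :=
  (isClosed_le (f := fun q : ℝ² => |q 1|) (by fun_prop) (by fun_prop)).inter
    (isClosed_le (f := fun q : ℝ² => q 0) (by fun_prop) (by fun_prop))

theorem inner_eq_fin_two (x y : ℝ²) : inner ℝ x y = x 0 * y 0 + x 1 * y 1 := by
  simp [PiLp.inner_apply, Fin.sum_univ_two, mul_comm]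

theorem isOpenMap_coord_zero : IsOpenMap fun x : ℝ² => x 0 :=
  (EuclideanSpace.proj (0 : Fin 2) : StrongDual ℝ ℝ²).isOpenMap fun r =>
    ⟨EuclideanSpace.single 0 r, by simp⟩

theorem corner_mem_frontier_coneTriangle (hh : 0 ≤ h) (ht : 0 ≤ t)
    (hc₀ : c 0 = h) (hc₁ : c 1 = h * t) : c ∈ frontier (coneTriangle h t) := by
  have hc : c ∈ coneTriangle h t := by
    refine ⟨?_, hc₀.le⟩
    rw [hc₀, hc₁, abs_of_nonneg (mul_nonneg hh ht), mul_comm]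
  refine mem_frontier_of_isMaxOn isOpenMap_coord_zero (by fun_prop) hc fun p hp => ?_
  simpa [hc₀] using hp.2

theorem inner_sub_corner_nonpos (hc₀ : c 0 = h) (hc₁ : c 1 = h * t)
    (hq_above : h * t ≤ q 1) (hq_normal : 0 ≤ (q 0 - h) + t * (q 1 - h * t)) :
    ∀ p ∈ coneTriangle h t, inner ℝ (q - c) (p - c) ≤ 0 := by
  rintro p ⟨hp₁, hp₀⟩
  have hslope : p 1 - h * t ≤ t * (p 0 - h) := by linarith [le_abs_self (p 1)]
  rw [inner_eq_fin_two]
  simp only [PiLp.sub_apply, hc₀, hc₁]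
  calc (q 0 - h) * (p 0 - h) + (q 1 - h * t) * (p 1 - h * t)
      ≤ (q 0 - h) * (p 0 - h) + (q 1 - h * t) * (t * (p 0 - h)) := by gcongr
    _ = (p 0 - h) * ((q 0 - h) + t * (q 1 - h * t)) := by ring
    _ ≤ 0 := mul_nonpos_of_nonpos_of_nonneg (by linarith) hq_normal

end ConeTriangle

theorem lt_and_pos_of_lbar_lt {h t a b : ℝ} (ht : 0 < t) {lbar : ℝ → ℝ}
    (hlbar₁ : ∀ x ≤ h, lbar x = -(x - h) / t + h * t)
    (hlbar₂ : ∀ x, h ≤ x → lbar x = h * t) (hab : lbar a < b) :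
    h * t < b ∧ 0 < (a - h) + t * (b - h * t) := by
  rcases le_total a h with hah | hha
  · rw [hlbar₁ a hah] at hab
    have hdiv : (h - a) / t < b - h * t := by rw [neg_sub] at hab; linarith
    have hmul : h - a < t * (b - h * t) := by rwa [div_lt_iff₀ ht, mul_comm] at hdiv
    exact ⟨by linarith [div_nonneg (sub_nonneg.mpr hah) ht.le], by linarith⟩
  · rw [hlbar₂ a hha] at hab
    exact ⟨hab, by nlinarith⟩

/-- Signed distance of the 2-D cone, upper corner region `P₁`: every
`q ∈ P₁ = {(x,y) : y > l̄₁(x)}` lies outside the triangle `F`, and the distance from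
`q` to the frontier of `F` is `‖q − q₁‖`, where `q₁ = (h, h·tan ψ)` is the upper
corner of `F`. -/
theorem sdf_cone_upper_corner_region
    (h ψ : ℝ) (hh : 0 < h) (hψ : ψ ∈ Set.Ioo 0 (Real.pi / 2))
    (F : Set (EuclideanSpace ℝ (Fin 2)))
    (hF : F = {q : EuclideanSpace ℝ (Fin 2) | |q 1| ≤ Real.tan ψ * q 0 ∧ q 0 ≤ h})
    (lbar : ℝ → ℝ)
    (hlbar₁ : ∀ x ≤ h, lbar x = -(x - h) / Real.tan ψ + h * Real.tan ψ)
    (hlbar₂ : ∀ x, h ≤ x → lbar x = h * Real.tan ψ)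
    (P₁ : Set (EuclideanSpace ℝ (Fin 2)))
    (hP₁ : P₁ = {q : EuclideanSpace ℝ (Fin 2) | lbar (q 0) < q 1})
    (q₁ : EuclideanSpace ℝ (Fin 2))
    (hq₁ : q₁ = (WithLp.equiv 2 (Fin 2 → ℝ)).symm ![h, h * Real.tan ψ]) :
    ∀ q ∈ P₁, q ∉ F ∧ Metric.infDist q (frontier F) = ‖q - q₁‖ := by
  have ht : 0 < Real.tan ψ := Real.tan_pos_of_pos_of_lt_pi_div_two hψ.1 hψ.2
  have hF' : F = coneTriangle h (Real.tan ψ) := hF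
  have hq₁₀ : q₁ 0 = h := by simp [hq₁]
  have hq₁₁ : q₁ 1 = h * Real.tan ψ := by simp [hq₁]
  subst hF' hP₁
  intro q hq
  obtain ⟨hq_above, hq_normal⟩ := lt_and_pos_of_lbar_lt ht hlbar₁ hlbar₂ hq
  have hobtuse := inner_sub_corner_nonpos hq₁₀ hq₁₁ hq_above.le hq_normal.le
  have hne : q ≠ q₁ := fun hqq => by rw [hqq, hq₁₁] at hq_above; exact lt_irrefl _ hq_above
  refine ⟨notMem_of_inner_sub_nonpos hobtuse hne, ?_⟩
  rw [infDist_frontier_eq_dist isClosed_coneTriangle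
    (corner_mem_frontier_coneTriangle hh.le ht.le hq₁₀ hq₁₁)
    fun p hp => dist_le_dist_of_inner_sub_nonpos hobtuse hp, dist_eq_norm]
end

section
/- Signed distance of the 2-D cone, apex region: fix h > 0 and ψ ∈ (0, π/2), and let P₃ = {(x, y) ∈ ℝ² : x ≤ 0 and |y| < −x/tan ψ}. Then every nonzero q ∈ P₃ lies outside F, and the distance from q to the frontier ∂F satisfies infDist(q, ∂F) = ‖q‖, i.e., the closest boundary point of F is the apex (0, 0). -/
/-!
Write `t = tan ψ > 0`. Every point `p` of `F` satisfies `|p₁| ≤ t p₀`, and every `q ∈ P₃`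
satisfies `t |q₁| ≤ -q₀`, so `⟪q, p⟫ ≤ p₀ (q₀ + t |q₁|) ≤ 0`: `q` lies in the polar cone of `F`.
Hence `‖q - p‖² = ‖q‖² - 2⟪q, p⟫ + ‖p‖² ≥ ‖q‖²` for all `p ∈ F`, with equality at the apex `0`,
which lies on the frontier of `F` because `(-ε, 0) ∉ F`. Taking `p = q` also shows `q ∉ F`.
-/

open Metric RealInnerProductSpace

theorem norm_le_dist_of_inner_nonpos {E : Type*} [NormedAddCommGroup E] [InnerProductSpace ℝ E]
    {p q : E} (h : ⟪q, p⟫ ≤ 0) : ‖q‖ ≤ dist q p := by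
  have hsq : ‖q‖ ^ 2 ≤ ‖q - p‖ ^ 2 := by
    rw [norm_sub_sq_real]
    nlinarith [sq_nonneg ‖p‖]
  rw [dist_eq_norm]
  exact (sq_le_sq₀ (norm_nonneg _) (norm_nonneg _)).mp hsq

theorem Metric.infDist_eq_dist_of_mem_of_forall_le {α : Type*} [PseudoMetricSpace α]
    {s : Set α} {x y : α} (hy : y ∈ s) (hmin : ∀ z ∈ s, dist x y ≤ dist x z) :
    infDist x s = dist x y :=
  le_antisymm (infDist_le_dist_of_mem hy) ((le_infDist ⟨y, hy⟩).mpr hmin)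

def truncatedCone (t h : ℝ) : Set (EuclideanSpace ℝ (Fin 2)) :=
  {p | |p 1| ≤ t * p 0 ∧ p 0 ≤ h}

namespace truncatedCone

variable {t h : ℝ}

theorem isClosed : IsClosed (truncatedCone t h) :=
  (isClosed_le (f := fun p : EuclideanSpace ℝ (Fin 2) => |p 1|) (by fun_prop) (by fun_prop)).inter
    (isClosed_le (f := fun p : EuclideanSpace ℝ (Fin 2) => p 0) (by fun_prop) continuous_const)

theorem zero_mem_frontier (ht : 0 < t) (hh : 0 ≤ h) : 0 ∈ frontier (truncatedCone t h) := by
  refine ⟨subset_closure ⟨by simp, by simpa using hh⟩, fun hint => ?_⟩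
  obtain ⟨ε, hε, hball⟩ := isOpen_iff.mp isOpen_interior 0 hint
  have hx : EuclideanSpace.single 0 (-(ε / 2)) ∈ ball (0 : EuclideanSpace ℝ (Fin 2)) ε := by
    rw [mem_ball_zero_iff, PiLp.norm_single, norm_neg, Real.norm_of_nonneg (by linarith)]
    linarith
  have hcone := (abs_nonneg _).trans (interior_subset (hball hx)).1
  simp only [PiLp.single_apply, if_true] at hcone
  nlinarith

theorem inner_nonpos (ht : 0 < t) {p q : EuclideanSpace ℝ (Fin 2)}
    (hp : p ∈ truncatedCone t h) (hq : t * |q 1| ≤ -q 0) : ⟪q, p⟫ ≤ 0 := by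
  have hp0 : 0 ≤ p 0 := nonneg_of_mul_nonneg_right ((abs_nonneg _).trans hp.1) ht
  calc ⟪q, p⟫ = q 0 * p 0 + q 1 * p 1 := by simp [PiLp.inner_apply, Fin.sum_univ_two, mul_comm]
    _ ≤ q 0 * p 0 + |q 1| * (t * p 0) := by
      have hq1p1 : q 1 * p 1 ≤ |q 1| * |p 1| := (le_abs_self _).trans (abs_mul _ _).le
      nlinarith [mul_le_mul_of_nonneg_left hp.1 (abs_nonneg (q 1))]
    _ = p 0 * (q 0 + t * |q 1|) := by ring
    _ ≤ 0 := mul_nonpos_of_nonneg_of_nonpos hp0 (by linarith)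

end truncatedCone

/-- Signed distance of the 2-D cone, apex region `P₃`: every nonzero
`q ∈ P₃ = {(x,y) : x ≤ 0, |y| < −x/tan ψ}` lies outside the triangle `F`, and the
distance from `q` to the frontier of `F` is `‖q‖`, i.e. the closest boundary point
of `F` is the apex `(0, 0)`. -/
theorem sdf_cone_apex_region
    (h ψ : ℝ) (hh : 0 < h) (hψ : ψ ∈ Set.Ioo 0 (Real.pi / 2))
    (F : Set (EuclideanSpace ℝ (Fin 2)))
    (hF : F = {q : EuclideanSpace ℝ (Fin 2) | |q 1| ≤ Real.tan ψ * q 0 ∧ q 0 ≤ h})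
    (P₃ : Set (EuclideanSpace ℝ (Fin 2)))
    (hP₃ : P₃ = {q : EuclideanSpace ℝ (Fin 2) | q 0 ≤ 0 ∧ |q 1| < -(q 0) / Real.tan ψ}) :
    ∀ q ∈ P₃, q ≠ 0 → q ∉ F ∧ Metric.infDist q (frontier F) = ‖q‖ := by
  have ht : 0 < Real.tan ψ := Real.tan_pos_of_pos_of_lt_pi_div_two hψ.1 hψ.2
  change F = truncatedCone (Real.tan ψ) h at hF
  subst hF hP₃
  rintro q ⟨-, hq⟩ hq0
  have hpolar : Real.tan ψ * |q 1| ≤ -q 0 := by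
    rw [lt_div_iff₀ ht] at hq
    linarith
  refine ⟨fun hqF => hq0 (real_inner_self_nonpos.mp (truncatedCone.inner_nonpos ht hqF hpolar)), ?_⟩
  rw [← dist_zero_right q]
  refine infDist_eq_dist_of_mem_of_forall_le (truncatedCone.zero_mem_frontier ht hh.le) ?_
  intro p hp
  rw [dist_zero_right]
  exact norm_le_dist_of_inner_nonpos
    (truncatedCone.inner_nonpos ht (truncatedCone.isClosed.frontier_subset hp) hpolar)
end
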